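/- Let V be a complex manifold of complex dimension m and u : V → ℝ smooth with (∂̄∂u)^{m+1} = 0 automatically (by dimension) and satisfying the identity 2u(∂̄∂u)^m = m (∂̄∂u)^{m-1} ∧ ∂̄u ∧ ∂u. Then on (ℂ\ℝ) × V the function u/Im s satisfies the homogeneous complex Monge–Ampère equation (∂̄∂(u/Im s))^{m+1} = 0. -/

import Mathlib

/-- Wirtinger derivative `∂_v f = (D_v f - i·D_{iv} f)/2` along the complex
direction `v`, `D` being the real Fréchet derivative. -/
noncomputable def wirD {E : Type*} [NormedAddCommGroup E] [NormedSpace ℂ E]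
    (v : E) (f : E → ℂ) (x : E) : ℂ :=
  (fderiv ℝ f x v - Complex.I * fderiv ℝ f x (Complex.I • v)) / 2

/-- Conjugate Wirtinger derivative `∂̄_v f = (D_v f + i·D_{iv} f)/2`. -/
noncomputable def wirDbar {E : Type*} [NormedAddCommGroup E] [NormedSpace ℂ E]
    (v : E) (f : E → ℂ) (x : E) : ℂ :=
  (fderiv ℝ f x v + Complex.I * fderiv ℝ f x (Complex.I • v)) / 2

/-- The coordinate directions on `ℂ × ℂᵐ`: index `0` is the `s`-direction,
index `a+1` is the `a`-th direction in `V = ℂᵐ`. -/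
noncomputable def dir (m : ℕ) : Fin (m + 1) → ℂ × (Fin m → ℂ) :=
  Fin.cases ((1 : ℂ), 0) (fun a => ((0 : ℂ), Pi.single a 1))

/- STATEMENT 16: let V = ℂᵐ and u : V → ℝ smooth, satisfying the identity
2u·(∂̄∂u)^m = m·(∂̄∂u)^{m-1} ∧ ∂̄u ∧ ∂u.  In coefficients (complex Hessian
H = (∂_a ∂̄_b u) and its adjugate) this identity reads
2u·det H = Σ_{a,b} adj(H)_{ba} · ∂_a u · ∂̄_b u, the form of the hypothesis
below.  Then on (ℂ\ℝ) × V the function u/Im s satisfies the homogeneous complex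
Monge–Ampère equation (∂̄∂(u/Im s))^{m+1} = 0, i.e. the determinant of the full
complex Hessian of u/Im s in the m+1 variables (s, z) vanishes. -/
/-- the ℝ-linear map `q ↦ (Im q.1 : ℂ)`. -/
noncomputable def LMdiv (m : ℕ) : (ℂ × (Fin m → ℂ)) →L[ℝ] ℂ :=
  Complex.ofRealCLM.comp (Complex.imCLM.comp (ContinuousLinearMap.fst ℝ ℂ (Fin m → ℂ)))

@[simp] lemma LMdiv_apply (m : ℕ) (q : ℂ × (Fin m → ℂ)) : LMdiv m q = (q.1.im : ℂ) := rfl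

lemma isOpen_imne (m : ℕ) : IsOpen {q : ℂ × (Fin m → ℂ) | q.1.im ≠ 0} := by
  have : {q : ℂ × (Fin m → ℂ) | q.1.im ≠ 0} = (fun q : ℂ × (Fin m → ℂ) => q.1.im) ⁻¹' {0}ᶜ := rfl
  rw [this]
  exact (Complex.continuous_im.comp continuous_fst).isOpen_preimage _ isOpen_compl_singleton

section analytic

variable {m : ℕ} {U : (Fin m → ℂ) → ℂ}

/-- derivative of `q ↦ (Im q.1 : ℂ)⁻¹`. -/
lemma hasFDerivAt_inv_im (q : ℂ × (Fin m → ℂ)) (hq : q.1.im ≠ 0) :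
    HasFDerivAt (fun q : ℂ × (Fin m → ℂ) => ((q.1.im : ℂ))⁻¹)
      ((((1 : ℂ →L[ℂ] ℂ).smulRight (-(((q.1.im : ℂ)) ^ 2)⁻¹)).restrictScalars ℝ).comp (LMdiv m))
      q := by
  have hq' : ((q.1.im : ℝ) : ℂ) ≠ 0 := Complex.ofReal_ne_zero.mpr hq
  have h3 := hasFDerivAt_inv (𝕜 := ℂ) hq'
  exact (h3.restrictScalars ℝ).comp q (LMdiv m).hasFDerivAt

/-- derivative of `q ↦ ((Im q.1 : ℂ)^2)⁻¹`. -/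
lemma hasFDerivAt_inv_sq_im (q : ℂ × (Fin m → ℂ)) (hq : q.1.im ≠ 0) :
    HasFDerivAt (fun q : ℂ × (Fin m → ℂ) => (((q.1.im : ℂ)) ^ 2)⁻¹)
      ((((1 : ℂ →L[ℂ] ℂ).smulRight (-((((q.1.im : ℂ)) ^ 2) ^ 2)⁻¹ * (2 * (q.1.im : ℂ) ^ 1))).restrictScalars ℝ).comp
        (LMdiv m)) q := by
  have hq' : ((q.1.im : ℝ) : ℂ) ≠ 0 := Complex.ofReal_ne_zero.mpr hq
  have hpow : HasDerivAt (fun x : ℂ => (x ^ 2)⁻¹)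
      (-((((q.1.im : ℂ)) ^ 2) ^ 2)⁻¹ * (2 * (q.1.im : ℂ) ^ 1)) ((q.1.im : ℂ)) := by
    have := (hasDerivAt_inv (pow_ne_zero 2 hq')).comp ((q.1.im : ℂ)) (hasDerivAt_pow 2 ((q.1.im : ℂ)))
    simpa [Function.comp_def] using this
  exact HasFDerivAt.comp (g := fun x : ℂ => (x ^ 2)⁻¹) q (hpow.hasFDerivAt.restrictScalars ℝ) (LMdiv m).hasFDerivAt

variable (hU : ContDiff ℝ (⊤ : ℕ∞) U)
include hU

lemma hasFDerivAt_U_snd (q : ℂ × (Fin m → ℂ)) :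
    HasFDerivAt (fun q : ℂ × (Fin m → ℂ) => U q.2)
      ((fderiv ℝ U q.2).comp (ContinuousLinearMap.snd ℝ ℂ (Fin m → ℂ))) q :=
  ((hU.differentiable (by simp)) q.2).hasFDerivAt.comp q hasFDerivAt_snd

lemma hasFDerivAt_wirDbar (wv : Fin m → ℂ) (z : Fin m → ℂ) :
    HasFDerivAt (wirDbar wv U)
      (((2 : ℂ)⁻¹) • (((ContinuousLinearMap.apply ℝ ℂ wv).comp (fderiv ℝ (fderiv ℝ U) z))
        + Complex.I • ((ContinuousLinearMap.apply ℝ ℂ (Complex.I • wv)).comp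
            (fderiv ℝ (fderiv ℝ U) z)))) z := by
  have hU2 : Differentiable ℝ (fderiv ℝ U) := (hU.fderiv_right (m := 1) (by exact WithTop.coe_le_coe.mpr le_top)).differentiable one_ne_zero
  have happly : ∀ (w : Fin m → ℂ), HasFDerivAt (fun z => fderiv ℝ U z w)
      ((ContinuousLinearMap.apply ℝ ℂ w).comp (fderiv ℝ (fderiv ℝ U) z)) z := fun w =>
    (ContinuousLinearMap.apply ℝ ℂ w).hasFDerivAt.comp z (hU2 z).hasFDerivAt
  have h := ((happly wv).add ((happly (Complex.I • wv)).const_mul Complex.I)).const_mul ((2:ℂ)⁻¹)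
  have hfun : wirDbar wv U = fun x =>
      (2:ℂ)⁻¹ * (fderiv ℝ U x wv + Complex.I * fderiv ℝ U x (Complex.I • wv)) := by
    funext x
    rw [wirDbar, div_eq_mul_inv, mul_comm]
  rw [hfun]
  exact h

lemma hasFDerivAt_f (q : ℂ × (Fin m → ℂ)) (hq : q.1.im ≠ 0) :
    HasFDerivAt (fun q : ℂ × (Fin m → ℂ) => U q.2 * ((q.1.im : ℂ))⁻¹)
      (U q.2 • ((((1 : ℂ →L[ℂ] ℂ).smulRight (-(((q.1.im : ℂ)) ^ 2)⁻¹)).restrictScalars ℝ).comp (LMdiv m))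
        + ((q.1.im : ℂ))⁻¹ • ((fderiv ℝ U q.2).comp (ContinuousLinearMap.snd ℝ ℂ (Fin m → ℂ)))) q :=
  (hasFDerivAt_U_snd hU q).mul (hasFDerivAt_inv_im q hq)

lemma wirDbar_dir_zero (q : ℂ × (Fin m → ℂ)) (hq : q.1.im ≠ 0) :
    wirDbar (dir m 0) (fun q : ℂ × (Fin m → ℂ) => U q.2 * ((q.1.im : ℂ))⁻¹) q
      = (-Complex.I / 2) * (U q.2 * (((q.1.im : ℂ)) ^ 2)⁻¹) := by
  rw [wirDbar, (hasFDerivAt_f hU q hq).fderiv]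
  simp [dir, smul_eq_mul]
  ring

lemma wirDbar_dir_succ (b : Fin m) (q : ℂ × (Fin m → ℂ)) (hq : q.1.im ≠ 0) :
    wirDbar (dir m b.succ) (fun q : ℂ × (Fin m → ℂ) => U q.2 * ((q.1.im : ℂ))⁻¹) q
      = wirDbar (Pi.single b 1) U q.2 * ((q.1.im : ℂ))⁻¹ := by
  rw [wirDbar, (hasFDerivAt_f hU q hq).fderiv, wirDbar]
  simp [dir, smul_eq_mul]
  ring


lemma entry_00 (p : ℂ × (Fin m → ℂ)) (hp : p.1.im ≠ 0) :
    wirD (dir m 0) (wirDbar (dir m 0) (fun q : ℂ × (Fin m → ℂ) => U q.2 * ((q.1.im : ℂ))⁻¹)) p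
      = U p.2 / (2 * (p.1.im : ℂ) ^ 3) := by
  have hEv : wirDbar (dir m 0) (fun q : ℂ × (Fin m → ℂ) => U q.2 * ((q.1.im : ℂ))⁻¹)
      =ᶠ[nhds p] fun q => (-Complex.I / 2) * (U q.2 * (((q.1.im : ℂ)) ^ 2)⁻¹) :=
    Filter.eventuallyEq_of_mem ((isOpen_imne m).mem_nhds hp)
      (fun q hq => wirDbar_dir_zero hU q hq)
  have hG : HasFDerivAt (fun q : ℂ × (Fin m → ℂ) => -Complex.I / 2 * (U q.2 * (((q.1.im : ℂ)) ^ 2)⁻¹)) _ p :=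
    ((hasFDerivAt_U_snd hU p).mul (hasFDerivAt_inv_sq_im p hp)).const_mul (-Complex.I/2)
  rw [wirD, hEv.fderiv_eq, hG.fderiv]
  have hc : ((p.1.im : ℝ) : ℂ) ≠ 0 := Complex.ofReal_ne_zero.mpr hp
  simp [dir, smul_eq_mul]
  field_simp
  ring_nf
  simp [Complex.I_sq, inv_pow, mul_inv_cancel₀ (pow_ne_zero 4 hc),
    mul_inv_cancel_right₀ (pow_ne_zero 4 hc)]
  try field_simp
  try ring

lemma entry_a0 (a : Fin m) (p : ℂ × (Fin m → ℂ)) (hp : p.1.im ≠ 0) :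
    wirD (dir m a.succ) (wirDbar (dir m 0) (fun q : ℂ × (Fin m → ℂ) => U q.2 * ((q.1.im : ℂ))⁻¹)) p
      = -(Complex.I * wirD (Pi.single a 1) U p.2) / (2 * (p.1.im : ℂ) ^ 2) := by
  have hEv : wirDbar (dir m 0) (fun q : ℂ × (Fin m → ℂ) => U q.2 * ((q.1.im : ℂ))⁻¹)
      =ᶠ[nhds p] fun q => (-Complex.I / 2) * (U q.2 * (((q.1.im : ℂ)) ^ 2)⁻¹) :=
    Filter.eventuallyEq_of_mem ((isOpen_imne m).mem_nhds hp)
      (fun q hq => wirDbar_dir_zero hU q hq)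
  have hG : HasFDerivAt (fun q : ℂ × (Fin m → ℂ) => -Complex.I / 2 * (U q.2 * (((q.1.im : ℂ)) ^ 2)⁻¹)) _ p :=
    ((hasFDerivAt_U_snd hU p).mul (hasFDerivAt_inv_sq_im p hp)).const_mul (-Complex.I/2)
  rw [wirD, hEv.fderiv_eq, hG.fderiv, wirD]
  have hc : ((p.1.im : ℝ) : ℂ) ≠ 0 := Complex.ofReal_ne_zero.mpr hp
  simp [dir, smul_eq_mul]
  field_simp
  ring_nf
  try field_simp
  try ring

lemma entry_0b (b : Fin m) (p : ℂ × (Fin m → ℂ)) (hp : p.1.im ≠ 0) :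
    wirD (dir m 0) (wirDbar (dir m b.succ) (fun q : ℂ × (Fin m → ℂ) => U q.2 * ((q.1.im : ℂ))⁻¹)) p
      = Complex.I * wirDbar (Pi.single b 1) U p.2 / (2 * (p.1.im : ℂ) ^ 2) := by
  have hEv : wirDbar (dir m b.succ) (fun q : ℂ × (Fin m → ℂ) => U q.2 * ((q.1.im : ℂ))⁻¹)
      =ᶠ[nhds p] fun q => wirDbar (Pi.single b 1) U q.2 * ((q.1.im : ℂ))⁻¹ :=
    Filter.eventuallyEq_of_mem ((isOpen_imne m).mem_nhds hp)
      (fun q hq => wirDbar_dir_succ hU b q hq)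
  have h1 : HasFDerivAt (fun q : ℂ × (Fin m → ℂ) => wirDbar (Pi.single b 1) U q.2)
      ((((2 : ℂ)⁻¹) • (((ContinuousLinearMap.apply ℝ ℂ ((Pi.single b 1 : Fin m → ℂ))).comp (fderiv ℝ (fderiv ℝ U) p.2))
        + Complex.I • ((ContinuousLinearMap.apply ℝ ℂ (Complex.I • (Pi.single b 1 : Fin m → ℂ))).comp
            (fderiv ℝ (fderiv ℝ U) p.2)))).comp (ContinuousLinearMap.snd ℝ ℂ (Fin m → ℂ))) p :=
    (hasFDerivAt_wirDbar hU (Pi.single b 1) p.2).comp p hasFDerivAt_snd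
  have hG : HasFDerivAt (fun q : ℂ × (Fin m → ℂ) => wirDbar (Pi.single b 1) U q.2 * ((q.1.im : ℂ))⁻¹) _ p :=
    h1.mul (hasFDerivAt_inv_im p hp)
  rw [wirD, hEv.fderiv_eq, hG.fderiv]
  have hc : ((p.1.im : ℝ) : ℂ) ≠ 0 := Complex.ofReal_ne_zero.mpr hp
  simp [dir, smul_eq_mul]
  field_simp
  try field_simp
  try ring

lemma entry_ab (a b : Fin m) (p : ℂ × (Fin m → ℂ)) (hp : p.1.im ≠ 0) :
    wirD (dir m a.succ) (wirDbar (dir m b.succ) (fun q : ℂ × (Fin m → ℂ) => U q.2 * ((q.1.im : ℂ))⁻¹)) p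
      = wirD (Pi.single a 1) (wirDbar (Pi.single b 1) U) p.2 / (p.1.im : ℂ) := by
  have hEv : wirDbar (dir m b.succ) (fun q : ℂ × (Fin m → ℂ) => U q.2 * ((q.1.im : ℂ))⁻¹)
      =ᶠ[nhds p] fun q => wirDbar (Pi.single b 1) U q.2 * ((q.1.im : ℂ))⁻¹ :=
    Filter.eventuallyEq_of_mem ((isOpen_imne m).mem_nhds hp)
      (fun q hq => wirDbar_dir_succ hU b q hq)
  have h1 : HasFDerivAt (fun q : ℂ × (Fin m → ℂ) => wirDbar (Pi.single b 1) U q.2)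
      ((((2 : ℂ)⁻¹) • (((ContinuousLinearMap.apply ℝ ℂ ((Pi.single b 1 : Fin m → ℂ))).comp (fderiv ℝ (fderiv ℝ U) p.2))
        + Complex.I • ((ContinuousLinearMap.apply ℝ ℂ (Complex.I • (Pi.single b 1 : Fin m → ℂ))).comp
            (fderiv ℝ (fderiv ℝ U) p.2)))).comp (ContinuousLinearMap.snd ℝ ℂ (Fin m → ℂ))) p :=
    (hasFDerivAt_wirDbar hU (Pi.single b 1) p.2).comp p hasFDerivAt_snd
  have hG : HasFDerivAt (fun q : ℂ × (Fin m → ℂ) => wirDbar (Pi.single b 1) U q.2 * ((q.1.im : ℂ))⁻¹) _ p :=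
    h1.mul (hasFDerivAt_inv_im p hp)
  rw [wirD, hEv.fderiv_eq, hG.fderiv, wirD,
    (hasFDerivAt_wirDbar hU (Pi.single b 1) p.2).fderiv]
  have hc : ((p.1.im : ℝ) : ℂ) ≠ 0 := Complex.ofReal_ne_zero.mpr hp
  simp [dir, smul_eq_mul]
  field_simp
  try field_simp
  try ring

end analytic

open Matrix Finset in
lemma det_block {m : ℕ} (α : ℂ) (v w : Fin m → ℂ) (A : Matrix (Fin m) (Fin m) ℂ) :
    (Matrix.of fun j k : Fin (m+1) =>
      Fin.cases (Fin.cases α v k) (fun a => Fin.cases (w a) (fun b => A a b) k) j).det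
    = α * A.det - ∑ a, ∑ b, A.adjugate b a * w a * v b := by
  cases m with
  | zero => simp [Matrix.det_fin_one, Matrix.det_fin_zero]
  | succ n =>
    set M : Matrix (Fin (n+2)) (Fin (n+2)) ℂ := Matrix.of fun j k : Fin (n+2) =>
      Fin.cases (Fin.cases α v k) (fun a => Fin.cases (w a) (fun b => A a b) k) j with hM
    -- RHS rewriting
    have hrhs : ∑ a, ∑ b, A.adjugate b a * w a * v b
        = ∑ b : Fin (n+1), (∑ a : Fin (n+1), (-1 : ℂ) ^ ((a : ℕ) + (b : ℕ)) * w a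
            * (A.submatrix a.succAbove b.succAbove).det) * v b := by
      rw [Finset.sum_comm]
      refine Finset.sum_congr rfl fun b _ => ?_
      rw [Finset.sum_mul]
      have h1 : ∀ a, A.adjugate b a * w a * v b
          = A.adjugate b a * w a * v b := fun _ => rfl
      have key : (∑ a, A.adjugate b a * w a) = (A.updateCol b w).det := by
        have := Matrix.cramer_eq_adjugate_mulVec A w
        have hb := congrFun this b
        rw [Matrix.cramer_apply] at hb
        rw [hb]
        simp [Matrix.mulVec, dotProduct]
      have expand : (A.updateCol b w).det
          = ∑ a : Fin (n+1), (-1:ℂ) ^ ((a:ℕ) + (b:ℕ)) * w a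
              * (A.submatrix a.succAbove b.succAbove).det := by
        rw [Matrix.det_succ_column (A.updateCol b w) b]
        refine Finset.sum_congr rfl fun a _ => ?_
        congr 1
        · rw [Matrix.updateCol_self]
        · congr 1
          ext i j
          rw [Matrix.submatrix_apply, Matrix.submatrix_apply,
            Matrix.updateCol_ne (Fin.succAbove_ne b j)]
      calc ∑ a, A.adjugate b a * w a * v b = (∑ a, A.adjugate b a * w a) * v b := by
            rw [Finset.sum_mul]
        _ = _ := by rw [key, expand, Finset.sum_mul]
    rw [hrhs]
    -- LHS expansion along row 0
    rw [Matrix.det_succ_row_zero, Fin.sum_univ_succ]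
    have h00 : M 0 0 = α := rfl
    have hA : M.submatrix Fin.succ (Fin.succAbove 0) = A := by
      ext a b
      simp [hM, Fin.succAbove_zero]
    have hterm : ∀ b : Fin (n+1),
        (-1:ℂ) ^ ((b.succ : ℕ)) * M 0 b.succ * (M.submatrix Fin.succ b.succ.succAbove).det
        = -((∑ a : Fin (n+1), (-1 : ℂ) ^ ((a : ℕ) + (b : ℕ)) * w a
            * (A.submatrix a.succAbove b.succAbove).det) * v b) := by
      intro b
      have h0b : M 0 b.succ = v b := rfl
      have hsub : (M.submatrix Fin.succ b.succ.succAbove).det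
          = ∑ a : Fin (n+1), (-1:ℂ) ^ (a:ℕ) * w a * (A.submatrix a.succAbove b.succAbove).det := by
        rw [Matrix.det_succ_column_zero]
        refine Finset.sum_congr rfl fun a _ => ?_
        congr 1
        · congr 1
          ext i j
          show M (a.succAbove i).succ (b.succ.succAbove j.succ) = A (a.succAbove i) (b.succAbove j)
          rw [Fin.succ_succAbove_succ]
          rfl
      rw [h0b, hsub, Fin.val_succ, Finset.mul_sum, Finset.sum_mul, ← Finset.sum_neg_distrib]
      refine Finset.sum_congr rfl fun a _ => ?_
      rw [pow_add, pow_succ, pow_add]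
      ring
    rw [Finset.sum_congr rfl (fun b _ => hterm b)]
    rw [h00, hA, Fin.val_zero, pow_zero, one_mul, Finset.sum_neg_distrib]
    ring


theorem monge_ampere_u_div_im_s (m : ℕ)
    (u : (Fin m → ℂ) → ℝ)
    (hu : ContDiff ℝ (⊤ : ℕ∞) (fun z : Fin m → ℂ => (u z : ℂ)))
    (hMA : ∀ z : Fin m → ℂ,
      2 * (u z : ℂ) *
          (Matrix.of fun a b : Fin m =>
            wirD (Pi.single a 1) (wirDbar (Pi.single b 1) (fun y => (u y : ℂ))) z).det
        = ∑ a : Fin m, ∑ b : Fin m,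
            (Matrix.of fun a' b' : Fin m =>
              wirD (Pi.single a' 1) (wirDbar (Pi.single b' 1) (fun y => (u y : ℂ))) z).adjugate b a
              * wirD (Pi.single a 1) (fun y => (u y : ℂ)) z
              * wirDbar (Pi.single b 1) (fun y => (u y : ℂ)) z)
    (p : ℂ × (Fin m → ℂ)) (hp : p.1.im ≠ 0) :
    (Matrix.of fun j k : Fin (m + 1) =>
        wirD (dir m j)
          (wirDbar (dir m k)
            (fun q : ℂ × (Fin m → ℂ) => (u q.2 : ℂ) / (q.1.im : ℂ))) p).det = 0 := by
  classical
  rcases Nat.eq_zero_or_pos m with hm0 | hm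
  · subst hm0
    have hu0 : ∀ z : Fin 0 → ℂ, (u z : ℂ) = 0 := by
      intro z
      have h := hMA z
      simp at h
      exact_mod_cast h
    have hfun : (fun q : ℂ × (Fin 0 → ℂ) => (u q.2 : ℂ) / (q.1.im : ℂ)) = fun _ => (0 : ℂ) := by
      funext q
      rw [hu0]
      simp
    rw [hfun]
    have h1 : ∀ v : ℂ × (Fin 0 → ℂ), wirDbar v (fun _ => (0 : ℂ)) = fun _ => 0 := by
      intro v
      funext x
      simp [wirDbar]
    rw [Matrix.det_fin_one]
    simp [h1, wirD]
  · have hfun : (fun q : ℂ × (Fin m → ℂ) => (u q.2 : ℂ) / (q.1.im : ℂ))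
        = (fun q : ℂ × (Fin m → ℂ) => (fun z : Fin m → ℂ => (u z : ℂ)) q.2 * ((q.1.im : ℂ))⁻¹) := by
      funext q
      rw [div_eq_mul_inv]
    rw [hfun]
    set c : ℂ := ((p.1.im : ℝ) : ℂ) with hcdef
    have hc : c ≠ 0 := Complex.ofReal_ne_zero.mpr hp
    have hM : (Matrix.of fun j k : Fin (m + 1) =>
        wirD (dir m j) (wirDbar (dir m k)
          (fun q : ℂ × (Fin m → ℂ) => (fun z : Fin m → ℂ => (u z : ℂ)) q.2 * ((q.1.im : ℂ))⁻¹)) p)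
        = Matrix.of (fun j k : Fin (m + 1) =>
            Fin.cases (Fin.cases ((u p.2 : ℂ) / (2 * c ^ 3))
                (fun b => Complex.I * wirDbar (Pi.single b 1) (fun z : Fin m → ℂ => (u z : ℂ)) p.2
                  / (2 * c ^ 2)) k)
              (fun a => Fin.cases
                (-(Complex.I * wirD (Pi.single a 1) (fun z : Fin m → ℂ => (u z : ℂ)) p.2)
                  / (2 * c ^ 2))
                (fun b => wirD (Pi.single a 1)
                  (wirDbar (Pi.single b 1) (fun z : Fin m → ℂ => (u z : ℂ))) p.2 / c) k) j) := by
      ext j k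
      simp only [Matrix.of_apply]
      induction j using Fin.cases with
      | zero =>
        induction k using Fin.cases with
        | zero => exact entry_00 hu p hp
        | succ b => exact entry_0b hu b p hp
      | succ a =>
        induction k using Fin.cases with
        | zero => exact entry_a0 hu a p hp
        | succ b => exact entry_ab hu a b p hp
    rw [hM]
    refine Eq.trans (det_block _ _ _ _) ?_
    have hA : ((fun a b : Fin m => wirD (Pi.single a 1)
        (wirDbar (Pi.single b 1) (fun z : Fin m → ℂ => (u z : ℂ))) p.2 / c) : Matrix (Fin m) (Fin m) ℂ)
        = c⁻¹ • (Matrix.of fun a b : Fin m =>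
            wirD (Pi.single a 1) (wirDbar (Pi.single b 1) (fun y => (u y : ℂ))) p.2) := by
      ext a b
      simp only [Matrix.of_apply, Matrix.smul_apply, smul_eq_mul]
      rw [div_eq_mul_inv, mul_comm]
    rw [hA, Matrix.det_smul, Matrix.adjugate_smul]
    set H : Matrix (Fin m) (Fin m) ℂ := Matrix.of fun a b : Fin m =>
      wirD (Pi.single a 1) (wirDbar (Pi.single b 1) (fun y => (u y : ℂ))) p.2 with hHdef
    have hrw : (∑ a : Fin m, ∑ b : Fin m,
          ((c⁻¹ ^ (Fintype.card (Fin m) - 1)) • H.adjugate) b a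
            * (-(Complex.I * wirD (Pi.single a 1) (fun z : Fin m → ℂ => (u z : ℂ)) p.2) / (2 * c ^ 2))
            * (Complex.I * wirDbar (Pi.single b 1) (fun z : Fin m → ℂ => (u z : ℂ)) p.2 / (2 * c ^ 2)))
        = (c⁻¹ ^ (m - 1) / (4 * c ^ 4)) * (2 * (u p.2 : ℂ) * H.det) := by
      rw [hMA p.2, Finset.mul_sum]
      refine Finset.sum_congr rfl fun a _ => ?_
      rw [Finset.mul_sum]
      refine Finset.sum_congr rfl fun b _ => ?_
      simp only [Matrix.smul_apply, smul_eq_mul, Fintype.card_fin]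
      linear_combination (-(c⁻¹ ^ (m - 1) * H.adjugate b a
        * wirD (Pi.single a 1) (fun z : Fin m → ℂ => (u z : ℂ)) p.2
        * wirDbar (Pi.single b 1) (fun z : Fin m → ℂ => (u z : ℂ)) p.2) / (4 * c ^ 4))
        * Complex.I_sq
    rw [hrw]
    have hm1 : (c⁻¹ : ℂ) ^ Fintype.card (Fin m) = c⁻¹ ^ (m - 1) * c⁻¹ := by
      rw [Fintype.card_fin]
      conv_lhs => rw [← Nat.sub_add_cancel hm]
      rw [pow_succ]
    rw [hm1]
    ring
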